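/- arXiv:2105.11513 — 3 statements merged into one kernel-verified Lean document; each statement's English description precedes it below -/
import Mathlib

section
/- Let G be a group, N a normal subgroup of G, and K, H subgroups of G. Let f : G ⧸ K → G ⧸ H be a G-equivariant map between the left coset spaces. Then the set of N-fixed points of G ⧸ K equals the preimage under f of the set of N-fixed points of G ⧸ H if and only if N ≤ K or N is not contained in H. -/
lemma fixed_aux {G : Type*} [Group G] (N : Subgroup G) [N.Normal] (K : Subgroup G)
    (x : G ⧸ K) : (∀ n ∈ N, n • x = x) ↔ N ≤ K := by
  induction x using QuotientGroup.induction_on with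
  | H g =>
    constructor
    · intro h m hm
      have hn : g * m * g⁻¹ ∈ N := Subgroup.Normal.conj_mem ‹N.Normal› m hm g
      have := h _ hn
      rw [MulAction.Quotient.smul_mk, QuotientGroup.eq] at this
      simpa [mul_assoc] using this
    · intro h n hn
      rw [MulAction.Quotient.smul_mk, QuotientGroup.eq]
      have : g⁻¹ * n⁻¹ * g ∈ N := Subgroup.Normal.conj_mem' ‹N.Normal› _ (inv_mem hn) g
      simpa [mul_assoc] using h this

/-- Let `N` be a normal subgroup of `G`, let `K, H` be subgroups, and let
`f : G ⧸ K → G ⧸ H` be a `G`-equivariant map of left coset spaces.  Then the `N`-fixed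
points of `G ⧸ K` coincide with the preimage under `f` of the `N`-fixed points of
`G ⧸ H` if and only if `N ≤ K` or `N` is not contained in `H`. -/
theorem fixedPoints_eq_preimage_iff {G : Type*} [Group G]
    (N : Subgroup G) [N.Normal] (K H : Subgroup G)
    (f : G ⧸ K → G ⧸ H) (hf : ∀ (g : G) (x : G ⧸ K), f (g • x) = g • f x) :
    {x : G ⧸ K | ∀ n ∈ N, n • x = x} = f ⁻¹' {y : G ⧸ H | ∀ n ∈ N, n • y = y} ↔
      (N ≤ K ∨ ¬ N ≤ H) := by
  have himp : N ≤ K → N ≤ H := by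
    intro hNK m hm
    obtain ⟨g, hg⟩ := QuotientGroup.mk_surjective (f ((1 : G) : G ⧸ K))
    set n : G := g * m * g⁻¹ with hn_def
    have hn : n ∈ N := Subgroup.Normal.conj_mem ‹N.Normal› m hm g
    have h2 : (n • ((1 : G) : G ⧸ K)) = ((1 : G) : G ⧸ K) := by
      rw [MulAction.Quotient.smul_mk, QuotientGroup.eq]
      simpa using hNK hn
    have h1 : f ((1 : G) : G ⧸ K) = n • f ((1 : G) : G ⧸ K) := by
      rw [← hf n _, h2]
    rw [← hg, MulAction.Quotient.smul_mk, QuotientGroup.eq] at h1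
    simpa [hn_def, mul_assoc] using h1
  constructor
  · intro heq
    by_contra hc
    push_neg at hc
    obtain ⟨hNK, hNH⟩ := hc
    have hx : ((1 : G) : G ⧸ K) ∈ f ⁻¹' {y : G ⧸ H | ∀ n ∈ N, n • y = y} :=
      (fixed_aux N H _).mpr hNH
    rw [← heq] at hx
    exact hNK ((fixed_aux N K _).mp hx)
  · rintro (hNK | hNH) <;> ext x <;>
      simp only [Set.mem_setOf_eq, Set.mem_preimage, fixed_aux]
    · exact iff_of_true hNK (himp hNK)
    · exact iff_of_false (fun h => hNH (himp h)) hNH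
end

section
/- Let G be a group and N a normal subgroup of G. Let S, T, T₁ be G-sets, and let g : S → T and t : T₁ → T be G-equivariant maps. Assume that the N-fixed points of S are exactly the preimage under g of the N-fixed points of T. Form the pullback P = {(s, x) ∈ S × T₁ | g s = t x}, a G-set under the diagonal action, and let g₁ : P → T₁ be the second projection. Then the N-fixed points of P are exactly the preimage under g₁ of the N-fixed points of T₁. -/
/-- Pullback stability of the fixed-point condition.  If `g : S → T` and `t : T₁ → T`
are `G`-equivariant maps and the `N`-fixed points of `S` are exactly the `g`-preimage of
the `N`-fixed points of `T`, then in the pullback `P = {(s, x) | g s = t x}` (with the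
diagonal `G`-action) the `N`-fixed points are exactly the preimage under the second
projection `g₁ : P → T₁` of the `N`-fixed points of `T₁`. -/
theorem fixedPoints_pullback {G : Type*} [Group G] (N : Subgroup G) [N.Normal]
    {S T T₁ : Type*} [MulAction G S] [MulAction G T] [MulAction G T₁]
    (g : S → T) (t : T₁ → T)
    (hg : ∀ (γ : G) (s : S), g (γ • s) = γ • g s)
    (ht : ∀ (γ : G) (x : T₁), t (γ • x) = γ • t x)
    (hfix : {s : S | ∀ n ∈ N, n • s = s} = g ⁻¹' {x : T | ∀ n ∈ N, n • x = x}) :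
    {p : S × T₁ | g p.1 = t p.2 ∧ ∀ n ∈ N, n • p = p} =
      {p : S × T₁ | g p.1 = t p.2 ∧ ∀ n ∈ N, n • p.2 = p.2} := by
  ext p
  simp only [Set.mem_setOf_eq]
  refine and_congr_right fun hp => ⟨fun h n hn => congrArg Prod.snd (h n hn), fun h n hn => ?_⟩
  have h1 : p.1 ∈ {s : S | ∀ n ∈ N, n • s = s} := by
    rw [hfix]
    intro m hm
    rw [hp, ← ht, h m hm]
  exact Prod.ext (h1 n hn) (h n hn)
end

section
/- Let G be a group, N a normal subgroup of G, and K a subgroup of G with N ≤ K. Let T be a K-set. Consider the coinduced set C = {f : G → T | ∀ k ∈ K, ∀ g ∈ G, f (k * g) = k • f g}, with G acting by (g' • f)(g) = f (g * g'). If f ∈ C is fixed by every element of N (that is, f (g * n) = f g for all n ∈ N and g ∈ G), then for every g ∈ G the value f g is fixed by every element of N acting through the inclusion N ≤ K. In particular, if T has no N-fixed points and G is nonempty, then C has no N-fixed points. -/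
/-- Let `N ≤ K` be subgroups of `G` with `N` normal in `G`, and let `T` be a `K`-set.
Consider the coinduced set `C = {f : G → T | f (k * g) = k • f g}` with `G`-action
`(g' • f) g = f (g * g')`.  If `f ∈ C` is `N`-fixed (i.e. `f (g * n) = f g` for all
`n ∈ N`, `g ∈ G`), then every value `f g` is an `N`-fixed point of `T` (with `N` acting
through `N ≤ K`).  In particular, if `T` has no `N`-fixed points and `G` is nonempty,
then `C` has no `N`-fixed points. -/
theorem coinduction_fixed_points {G : Type*} [Group G] (N K : Subgroup G) [N.Normal]
    (hNK : N ≤ K) {T : Type*} [MulAction K T] :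
    (∀ f : G → T, (∀ (k : K) (g : G), f ((k : G) * g) = k • f g) →
      (∀ n ∈ N, ∀ g : G, f (g * n) = f g) →
      ∀ (g : G) (n : G) (hn : n ∈ N), (⟨n, hNK hn⟩ : K) • f g = f g) ∧
    (Nonempty G →
      (¬ ∃ t : T, ∀ (n : G) (hn : n ∈ N), (⟨n, hNK hn⟩ : K) • t = t) →
      ¬ ∃ f : G → T, (∀ (k : K) (g : G), f ((k : G) * g) = k • f g) ∧
        (∀ n ∈ N, ∀ g : G, f (g * n) = f g)) := by
  have main : ∀ f : G → T, (∀ (k : K) (g : G), f ((k : G) * g) = k • f g) →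
      (∀ n ∈ N, ∀ g : G, f (g * n) = f g) →
      ∀ (g : G) (n : G) (hn : n ∈ N), (⟨n, hNK hn⟩ : K) • f g = f g := by
    intro f heq hfix g n hn
    have h1 : f ((⟨n, hNK hn⟩ : K) * g) = (⟨n, hNK hn⟩ : K) • f g := heq _ g
    have h2 : n * g = g * (g⁻¹ * n * g) := by group
    have h3 : g⁻¹ * n * g ∈ N := by
      have := Subgroup.Normal.conj_mem ‹N.Normal› n hn g⁻¹
      simpa using this
    have h4 : f (n * g) = f g := by
      rw [h2]; exact hfix _ h3 g
    rw [← h1]; exact h4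
  refine ⟨main, fun ⟨g⟩ hT ⟨f, heq, hfix⟩ => hT ⟨f g, fun n hn => main f heq hfix g n hn⟩⟩
end
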